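/- Let A = diag(0.5, 0.5) ∈ ℝ^{2×2}, B = (1,0)ᵀ ∈ ℝ^{2×1}, and K = -(0, 0.25) ∈ ℝ^{1×2}. Then there do not exist a symmetric positive definite matrix P ∈ ℝ^{2×2} and a scalar R > 0 such that (R + BᵀPB) K = -BᵀPA. Consequently K, although stabilizing, is not the optimal controller of any standard discrete-time LQR problem with Q ⪰ 0 and R > 0. -/

import Mathlib

/-!
`A + BK` is upper triangular with diagonal `1/2`, so its only eigenvalue is `1/2`.
Since `A = (1/2) • 1` and `KB = 0`, multiplying the stationarity condition on the right by `B`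
gives `(1/2) BᵀPB = 0`, which forces `B = 0` because `P` is positive definite.
-/

open Matrix

/-- A real square matrix is Schur stable if all its complex eigenvalues
lie strictly inside the unit disk. -/
def SchurStable {n : ℕ} (M : Matrix (Fin n) (Fin n) ℝ) : Prop :=
  ∀ μ ∈ spectrum ℂ (M.map (algebraMap ℝ ℂ)), ‖μ‖ < 1

theorem schurStable_of_isUpperTriangular {n : ℕ} {M : Matrix (Fin n) (Fin n) ℝ}
    (hM : M.IsUpperTriangular) (hdiag : ∀ i, |M i i| < 1) : SchurStable M := by
  intro μ hμ
  have hM' : (M.map (algebraMap ℝ ℂ)).IsUpperTriangular := fun i j hij => by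
    simp [hM hij]
  rw [mem_spectrum_iff_isRoot_charpoly, charpoly_of_isUpperTriangular _ hM',
    Polynomial.IsRoot, Polynomial.eval_prod, Finset.prod_eq_zero_iff] at hμ
  obtain ⟨i, -, hi⟩ := hμ
  rw [Polynomial.eval_sub, Polynomial.eval_X, Polynomial.eval_C, sub_eq_zero] at hi
  simpa [hi] using hdiag i

theorem Matrix.PosDef.eq_zero_of_transpose_mul_mul_eq_zero {n m : Type*} [Fintype n]
    {P : Matrix n n ℝ} (hP : P.PosDef) {B : Matrix n m ℝ} (h : Bᵀ * P * B = 0) : B = 0 := by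
  ext i j
  by_contra hne
  have hcol : Bᵀ j ≠ 0 := fun h0 => hne (congrFun h0 i)
  have hquad : (Bᵀ * P * B) j j = Bᵀ j ⬝ᵥ P *ᵥ Bᵀ j := by
    rw [Matrix.mul_assoc, Matrix.mul_apply]
    simp [dotProduct, mulVec, Matrix.mul_apply]
  have := hP.dotProduct_mulVec_pos hcol
  simp [← hquad, h] at this

def IsLQRStationary {n m : Type*} [Fintype n] [Fintype m] (A P : Matrix n n ℝ)
    (B : Matrix n m ℝ) (R : Matrix m m ℝ) (K : Matrix m n ℝ) : Prop :=
  (R + Bᵀ * P * B) * K = -(Bᵀ * P * A)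

theorem not_isLQRStationary_smul_one_of_mul_eq_zero {n m : Type*} [Fintype n] [DecidableEq n]
    [Fintype m] {P : Matrix n n ℝ} (hP : P.PosDef) {a : ℝ} (ha : a ≠ 0) {B : Matrix n m ℝ}
    (hB : B ≠ 0) {K : Matrix m n ℝ} (hKB : K * B = 0) (R : Matrix m m ℝ) :
    ¬ IsLQRStationary (a • 1) P B R K := by
  intro h
  have hBPB : a • (Bᵀ * P * B) = 0 := by
    simpa [Matrix.mul_assoc, hKB] using (congrArg (· * B) h).symm
  exact hB (hP.eq_zero_of_transpose_mul_mul_eq_zero ((smul_eq_zero.mp hBPB).resolve_left ha))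

theorem stmt_1 :
    let A : Matrix (Fin 2) (Fin 2) ℝ := !![(0.5 : ℝ), 0; 0, 0.5]
    let B : Matrix (Fin 2) (Fin 1) ℝ := !![(1 : ℝ); 0]
    let K : Matrix (Fin 1) (Fin 2) ℝ := !![(0 : ℝ), -0.25]
    SchurStable (A + B * K) ∧
      ¬ ∃ (P : Matrix (Fin 2) (Fin 2) ℝ) (R : ℝ),
          P.PosDef ∧ 0 < R ∧
          (R • (1 : Matrix (Fin 1) (Fin 1) ℝ) + Bᵀ * P * B) * K
            = -(Bᵀ * P * A) := by
  intro A B K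
  have hA : A = (0.5 : ℝ) • 1 := by
    ext i j; fin_cases i <;> fin_cases j <;> simp [A]
  have hABK : A + B * K = !![(0.5 : ℝ), -0.25; 0, 0.5] := by
    ext i j; fin_cases i <;> fin_cases j <;> simp [A, B, K]
  have hKB : K * B = 0 := by
    ext i j; fin_cases i; fin_cases j; simp [B, K]
  have hB : B ≠ 0 := fun h => by simpa [B] using congrFun (congrFun h 0) 0
  refine ⟨?_, ?_⟩
  · rw [hABK]
    refine schurStable_of_isUpperTriangular (fun i j hij => ?_) (fun i => ?_)
    · fin_cases i <;> fin_cases j <;> simp_all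
    · fin_cases i <;> norm_num
  · rintro ⟨P, R, hP, -, h⟩
    rw [hA] at h
    exact not_isLQRStationary_smul_one_of_mul_eq_zero hP (by norm_num) hB hKB _ h
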